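/- (Statistical dominated convergence) Let (f_n), f be measurable functions on [0,1) with Lebesgue measure λ. If (f_n) converges statistically almost everywhere to f and there exists g ∈ L¹(λ) with |f_n(x)| ≤ g(x) λ-a.e. for all n, then the sequence of integrals (∫ f_n dλ) converges statistically to ∫ f dλ. -/

import Mathlib

open Filter MeasureTheory
open scoped Classical ENNReal

/-- `dens A c`: the set `A ⊆ ℕ` has natural density `c`. -/
def dens (A : Set ℕ) (c : ℝ) : Prop :=
  Tendsto (fun n : ℕ => (((Finset.range n).filter (fun k => k ∈ A)).card : ℝ) / n)
    atTop (nhds c)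

/-- Statistical convergence of a real sequence. -/
def StatTendsto (a : ℕ → ℝ) (l : ℝ) : Prop :=
  ∀ ε > 0, dens {n | ε ≤ |a n - l|} 0

/-- A sequence is measurable in the sense of Fast if the densities of the sets
`{n : a n < x}` exist outside an at most countable set of `x`'s. -/
def FastMeasurable (a : ℕ → ℝ) : Prop :=
  ∃ S : Set ℝ, S.Countable ∧ ∀ x ∉ S, ∃ c, dens {n | a n < x} c

/-!
Put `h n x = |f n x - F x|`, so that `0 ≤ h n x ≤ 2 g x` almost everywhere. For a bounded
nonnegative sequence, statistical convergence to `0` is equivalent to convergence of its Cesàro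
means to `0`. Hence the Cesàro means of `n ↦ h n x` tend to `0` for almost every `x`; they are
dominated by `2 g`, so by dominated convergence the Cesàro means of `n ↦ ∫ h n` tend to `0`,
that is `∫ h n → 0` statistically. Finally `|∫ f n - ∫ F| ≤ ∫ h n`.
-/

open Topology

noncomputable def cesaroMean (a : ℕ → ℝ) (n : ℕ) : ℝ :=
  (∑ k ∈ Finset.range n, a k) / n

lemma abs_cesaroMean_le {a : ℕ → ℝ} {C : ℝ} (h : ∀ k, |a k| ≤ C) (n : ℕ) :
    |cesaroMean a n| ≤ C := by
  rcases Nat.eq_zero_or_pos n with rfl | hn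
  · simpa [cesaroMean] using (abs_nonneg _).trans (h 0)
  have hn' : (0 : ℝ) < n := by exact_mod_cast hn
  rw [cesaroMean, abs_div, Nat.abs_cast, div_le_iff₀ hn']
  calc |∑ k ∈ Finset.range n, a k| ≤ ∑ k ∈ Finset.range n, |a k| := Finset.abs_sum_le_sum_abs _ _
    _ ≤ ∑ _k ∈ Finset.range n, C := Finset.sum_le_sum fun k _ => h k
    _ = C * n := by simp [mul_comm]

lemma dens_zero_of_subset {B C : Set ℕ} (h : B ⊆ C) (hC : dens C 0) : dens B 0 :=
  squeeze_zero (fun n => by positivity) (fun n => div_le_div_of_nonneg_right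
    (by exact_mod_cast Finset.card_le_card (Finset.monotone_filter_right _ fun k _ hk => h hk))
    (Nat.cast_nonneg n)) hC

lemma dens_univ : dens Set.univ 1 := by
  refine tendsto_const_nhds.congr' ?_
  filter_upwards [eventually_ne_atTop 0] with n hn
  simp [hn]

lemma StatTendsto.of_abs_sub_le {a b : ℕ → ℝ} {l : ℝ} (hb : StatTendsto b 0)
    (hab : ∀ n, |a n - l| ≤ b n) : StatTendsto a l := fun ε hε =>
  dens_zero_of_subset (fun n hn => (hn.trans (hab n)).trans (by simp [le_abs_self]))
    (hb ε hε)

lemma StatTendsto.abs_sub_statTendsto_zero {a : ℕ → ℝ} {l : ℝ} (h : StatTendsto a l) :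
    StatTendsto (fun n => |a n - l|) 0 := by
  simpa [StatTendsto] using h

lemma StatTendsto.abs_le {a : ℕ → ℝ} {l C : ℝ} (h : StatTendsto a l) (hC : ∀ n, |a n| ≤ C) :
    |l| ≤ C := by
  by_contra! hlC
  have hall : {n | |l| - C ≤ |a n - l|} = Set.univ :=
    Set.eq_univ_of_forall fun n => by
      have := abs_sub_abs_le_abs_sub l (a n)
      rw [Set.mem_ofPred_eq, abs_sub_comm]
      linarith [hC n]
  have h0 := h _ (sub_pos.2 hlC)
  rw [hall] at h0
  exact zero_ne_one (tendsto_nhds_unique h0 dens_univ)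

lemma statTendsto_zero_iff_of_nonneg {a : ℕ → ℝ} (ha : ∀ k, 0 ≤ a k) :
    StatTendsto a 0 ↔ ∀ ε > 0, dens {k | ε ≤ a k} 0 := by
  simp only [StatTendsto, sub_zero, abs_of_nonneg (ha _)]

/-- Markov's inequality for densities: `ε · #{k < n | ε ≤ a k} ≤ ∑_{k < n} a k`. -/
lemma statTendsto_zero_of_cesaroMean {a : ℕ → ℝ} (ha : ∀ k, 0 ≤ a k)
    (h : Tendsto (cesaroMean a) atTop (𝓝 0)) : StatTendsto a 0 := by
  refine (statTendsto_zero_iff_of_nonneg ha).2 fun ε hε => ?_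
  refine squeeze_zero (fun n => by positivity) (fun n => ?_) (by simpa using h.div_const ε)
  rw [cesaroMean, div_div, mul_comm, ← div_div]
  gcongr
  rw [le_div_iff₀ hε]
  calc ((Finset.range n).filter (· ∈ {k | ε ≤ a k})).card * ε
      ≤ ∑ k ∈ (Finset.range n).filter (· ∈ {k | ε ≤ a k}), a k := by
        rw [← nsmul_eq_mul]
        exact Finset.card_nsmul_le_sum _ _ _ fun k hk => (Finset.mem_filter.1 hk).2
    _ ≤ ∑ k ∈ Finset.range n, a k :=
        Finset.sum_le_sum_of_subset_of_nonneg (Finset.filter_subset _ _) fun k _ _ => ha k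

lemma cesaroMean_le_add_mul_density {a : ℕ → ℝ} {C δ : ℝ} (hC : ∀ k, a k ≤ C) (hδ : 0 < δ)
    (n : ℕ) : cesaroMean a n ≤
      δ + C * ({k ∈ Finset.range n | δ ≤ a k}.card / n) := by
  rcases Nat.eq_zero_or_pos n with rfl | hn
  · simpa [cesaroMean] using hδ.le
  have hn' : (0 : ℝ) < n := by exact_mod_cast hn
  have hsum : ∑ k ∈ Finset.range n, a k ≤
      ∑ k ∈ Finset.range n, (δ + if δ ≤ a k then C else 0) :=
    Finset.sum_le_sum fun k _ => by
      split_ifs with hk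
      · linarith [hC k]
      · linarith [not_le.1 hk]
  rw [Finset.sum_add_distrib, ← Finset.sum_filter] at hsum
  simp only [Finset.sum_const, Finset.card_range, nsmul_eq_mul] at hsum
  rw [cesaroMean, div_le_iff₀ hn']
  calc _ ≤ _ := hsum
    _ = _ := by field_simp

lemma cesaroMean_tendsto_zero {a : ℕ → ℝ} {C : ℝ} (ha : ∀ k, 0 ≤ a k) (hC : ∀ k, a k ≤ C)
    (h : StatTendsto a 0) : Tendsto (cesaroMean a) atTop (𝓝 0) := by
  rw [statTendsto_zero_iff_of_nonneg ha] at h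
  refine tendsto_order.2 ⟨fun b hb => Eventually.of_forall fun n => hb.trans_le ?_,
    fun ε hε => ?_⟩
  · exact div_nonneg (Finset.sum_nonneg fun k _ => ha k) n.cast_nonneg
  have hsmall := (h (ε / 2) (half_pos hε)).const_mul C
  rw [mul_zero] at hsmall
  filter_upwards [hsmall.eventually (gt_mem_nhds (half_pos hε))] with n hn
  linarith [cesaroMean_le_add_mul_density hC (half_pos hε) n]

lemma integral_cesaroMean {α : Type*} [MeasurableSpace α] {μ : Measure α} {f : ℕ → α → ℝ}
    (hf : ∀ k, Integrable (f k) μ) (n : ℕ) :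
    ∫ x, cesaroMean (fun k => f k x) n ∂μ = cesaroMean (fun k => ∫ x, f k x ∂μ) n := by
  rw [cesaroMean, ← integral_finsetSum _ fun k _ => hf k, ← integral_div]
  rfl

theorem StatTendsto.integral_of_dominated {α : Type*} [MeasurableSpace α] {μ : Measure α}
    {f : ℕ → α → ℝ} {F g : α → ℝ}
    (hf : ∀ n, AEStronglyMeasurable (f n) μ) (hF : AEStronglyMeasurable F μ)
    (hg : Integrable g μ) (hdom : ∀ n, ∀ᵐ x ∂μ, |f n x| ≤ g x)
    (hae : ∀ᵐ x ∂μ, StatTendsto (fun n => f n x) (F x)) :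
    StatTendsto (fun n => ∫ x, f n x ∂μ) (∫ x, F x ∂μ) := by
  have hdom_all : ∀ᵐ x ∂μ, ∀ n, |f n x| ≤ g x := ae_all_iff.2 hdom
  have hFg : ∀ᵐ x ∂μ, |F x| ≤ g x := by
    filter_upwards [hdom_all, hae] with x hx hst using hst.abs_le hx
  have hfi : ∀ n, Integrable (f n) μ := fun n => hg.mono' (hf n) (by simpa using hdom n)
  have hFi : Integrable F μ := hg.mono' hF (by simpa using hFg)
  set h : ℕ → α → ℝ := fun n x => |f n x - F x|
  have hhi : ∀ n, Integrable (h n) μ := fun n => ((hfi n).sub hFi).abs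
  have hh_le : ∀ᵐ x ∂μ, ∀ n, |h n x| ≤ 2 * g x := by
    filter_upwards [hdom_all, hFg] with x hx hFx n
    rw [abs_abs]
    linarith [abs_sub (f n x) (F x), hx n]
  have hmean : Tendsto (cesaroMean fun n => ∫ x, h n x ∂μ) atTop (𝓝 0) := by
    refine (tendsto_congr (integral_cesaroMean hhi)).1 ?_
    rw [← integral_zero α ℝ]
    refine tendsto_integral_of_dominated_convergence (fun x => 2 * g x) (fun n => ?_)
      (hg.const_mul 2) (fun n => ?_) ?_
    · exact ((integrable_finsetSum _ fun k _ => hhi k).div_const _).aestronglyMeasurable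
    · filter_upwards [hh_le] with x hx using abs_cesaroMean_le hx n
    · filter_upwards [hae, hh_le] with x hx hb
      exact cesaroMean_tendsto_zero (fun k => abs_nonneg _)
        (fun k => (le_abs_self _).trans (hb k)) hx.abs_sub_statTendsto_zero
  refine .of_abs_sub_le (statTendsto_zero_of_cesaroMean
    (fun n => integral_nonneg fun x => abs_nonneg _) hmean) fun n => ?_
  rw [← integral_sub (hfi n) hFi]
  simpa only [Real.norm_eq_abs] using norm_integral_le_integral_norm (fun x => f n x - F x)

theorem stat_dominated_convergence_general
    (f : ℕ → ℝ → ℝ) (F g : ℝ → ℝ)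
    (hf : ∀ n, Measurable (f n)) (hF : Measurable F)
    (μ : Measure ℝ)
    (hg : Integrable g μ)
    (hdom : ∀ n, ∀ᵐ x ∂μ, |f n x| ≤ g x)
    (hae : ∀ᵐ x ∂μ, StatTendsto (fun n => f n x) (F x)) :
    StatTendsto (fun n => ∫ x, f n x ∂μ) (∫ x, F x ∂μ) :=
  .integral_of_dominated (fun n => (hf n).aestronglyMeasurable) hF.aestronglyMeasurable hg hdom hae

theorem stat_dominated_convergence
    (f : ℕ → ℝ → ℝ) (F g : ℝ → ℝ)
    (hf : ∀ n, Measurable (f n)) (hF : Measurable F)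
    (μ : Measure ℝ) (hμ : μ = volume.restrict (Set.Ico (0:ℝ) 1))
    (hg : Integrable g μ)
    (hdom : ∀ n, ∀ᵐ x ∂μ, |f n x| ≤ g x)
    (hae : ∀ᵐ x ∂μ, StatTendsto (fun n => f n x) (F x)) :
    StatTendsto (fun n => ∫ x, f n x ∂μ) (∫ x, F x ∂μ) :=
  stat_dominated_convergence_general f F g hf hF μ hg hdom hae
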